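/- Let L be a Euclidean lattice spanning a finite-dimensional real inner product space E, let F₁ and F₂ be mutually orthogonal subspaces of E, let F₃ = F₁ ⊕ F₂, let π_i denote the orthogonal projection onto F_i for i = 1, 2, 3, and set L_i = L ∩ F_i. Then: (a) π₁ and π₂ induce injective ℤ-module homomorphisms L₃/(L₁ ⊕ L₂) → π₁(L)/L₁ and L₃/(L₁ ⊕ L₂) → π₂(L)/L₂; (b) there are natural surjective ℤ-module homomorphisms π₁(L)/L₁ → (π₁(L) ⊕ π₂(L))/π₃(L) and π₂(L)/L₂ → (π₁(L) ⊕ π₂(L))/π₃(L). -/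

import Mathlib

open scoped RealInnerProductSpace Classical

noncomputable section

section LatticeDefs

variable {E : Type*} [NormedAddCommGroup E] [InnerProductSpace ℝ E] [FiniteDimensional ℝ E]

/-- `L` is a Euclidean lattice in `E`: a finitely generated discrete `ℤ`-submodule
spanning `E` over `ℝ`. -/
def IsEucLattice (L : Submodule ℤ E) : Prop :=
  L.FG ∧ DiscreteTopology L ∧ Submodule.span ℝ (L : Set E) = ⊤

/-- The rank of a lattice: the dimension of its real span. -/
def latRank (L : Submodule ℤ E) : ℕ :=
  Module.finrank ℝ (Submodule.span ℝ (L : Set E))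

/-- The volume of a lattice: the square root of the Gram determinant of a `ℤ`-basis
(set to `0` if no finite `ℤ`-basis exists). -/
def latVol (L : Submodule ℤ E) : ℝ :=
  if h : ∃ n : ℕ, Nonempty (Module.Basis (Fin n) ℤ L) then
    Real.sqrt (Matrix.det (Matrix.of fun i j : Fin h.choose =>
      ⟪(↑(h.choose_spec.some i) : E), (↑(h.choose_spec.some j) : E)⟫))
  else 0

/-- The slope `μ(L) = (vol L) ^ (1 / rk L)`. -/
def latSlope (L : Submodule ℤ E) : ℝ :=
  latVol L ^ ((latRank L : ℝ)⁻¹)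

/-- `M` is a (primitive) sublattice of `L`: `M = L ∩ F` for a real subspace `F`. -/
def IsSublatticeOf (L M : Submodule ℤ E) : Prop :=
  ∃ F : Submodule ℝ E, M = L ⊓ F.restrictScalars ℤ

/-- The minimal slope: the infimum (in fact minimum) of slopes of nonzero sublattices. -/
def muMin (L : Submodule ℤ E) : ℝ :=
  sInf (latSlope '' {M : Submodule ℤ E | IsSublatticeOf L M ∧ M ≠ ⊥})

/-- The orthogonal projection of `E` onto a subspace `F`, as a `ℤ`-linear endomorphism. -/
def projMap (F : Submodule ℝ E) : E →ₗ[ℤ] E :=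
  ((F.subtype.comp (F.orthogonalProjectionOnto).toLinearMap)).restrictScalars ℤ

/-- The image `π_F(L)` of a lattice under orthogonal projection onto `F`. -/
def projLat (F : Submodule ℝ E) (L : Submodule ℤ E) : Submodule ℤ E :=
  L.map (projMap F)

lemma projMap_mem_projLat (F : Submodule ℝ E) (L : Submodule ℤ E) {x : E} (hx : x ∈ L) :
    projMap F x ∈ projLat F L :=
  Submodule.mem_map_of_mem hx

/-- The quotient lattice `L/M`: the image of `L` under the orthogonal projection onto the
orthogonal complement of the real span of `M`. -/
def quotLat (L M : Submodule ℤ E) : Submodule ℤ E :=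
  projLat (Submodule.span ℝ (M : Set E))ᗮ L

/-- The maximal slope: the supremum (in fact maximum) of `μ(L/N)` over proper sublattices. -/
def muMax (L : Submodule ℤ E) : ℝ :=
  sSup ((fun N => latSlope (quotLat L N)) '' {N : Submodule ℤ E | IsSublatticeOf L N ∧ N ≠ L})

/-- `L` is semistable if its minimal slope equals its slope. -/
def Semistable (L : Submodule ℤ E) : Prop :=
  muMin L = latSlope L

/-- `D` is the destabilizing sublattice of `L`: the maximal nonzero sublattice of slope
`μ_min(L)`. -/
def IsDestab (L D : Submodule ℤ E) : Prop :=
  IsSublatticeOf L D ∧ D ≠ ⊥ ∧ latSlope D = muMin L ∧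
    ∀ M : Submodule ℤ E, IsSublatticeOf L M → M ≠ ⊥ → latSlope M = muMin L → M ≤ D

/-- `N₀` is the co-destabilizing sublattice of `L`: the minimal proper sublattice with
`μ(L/N₀) = μ_max(L)`. -/
def IsCodestab (L N₀ : Submodule ℤ E) : Prop :=
  IsSublatticeOf L N₀ ∧ N₀ ≠ L ∧ latSlope (quotLat L N₀) = muMax L ∧
    ∀ N : Submodule ℤ E, IsSublatticeOf L N → N ≠ L → latSlope (quotLat L N) = muMax L → N₀ ≤ N

/-- The dual lattice `L* = {y | ⟨x, y⟩ ∈ ℤ for all x ∈ L}`. -/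
def dualLat (L : Submodule ℤ E) : Submodule ℤ E :=
  ⨅ x ∈ L, Submodule.comap (((innerSL ℝ x).toLinearMap).restrictScalars ℤ)
    (Submodule.span ℤ ({1} : Set ℝ))

end LatticeDefs

section TensorDefs

variable {E F G : Type*}
  [NormedAddCommGroup E] [InnerProductSpace ℝ E] [FiniteDimensional ℝ E]
  [NormedAddCommGroup F] [InnerProductSpace ℝ F] [FiniteDimensional ℝ F]
  [NormedAddCommGroup G] [InnerProductSpace ℝ G] [FiniteDimensional ℝ G]

/-- `t : E → F → G` realizes `G` as the tensor product `E ⊗ F` of inner product spaces: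
it satisfies `⟨x ⊗ y, x' ⊗ y'⟩ = ⟨x, x'⟩⟨y, y'⟩`, its image spans `G`, and
`dim G = dim E · dim F`. -/
def IsTensorProdMap (t : E →ₗ[ℝ] F →ₗ[ℝ] G) : Prop :=
  (∀ (x x' : E) (y y' : F), ⟪t x y, t x' y'⟫ = ⟪x, x'⟫ * ⟪y, y'⟫) ∧
  Submodule.span ℝ (Set.range fun p : E × F => t p.1 p.2) = ⊤ ∧
  Module.finrank ℝ G = Module.finrank ℝ E * Module.finrank ℝ F

/-- The tensor product lattice `L ⊗ M` inside the model `G` of `E ⊗ F`. -/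
def tensorLat (t : E →ₗ[ℝ] F →ₗ[ℝ] G) (L : Submodule ℤ E) (M : Submodule ℤ F) :
    Submodule ℤ G :=
  Submodule.span ℤ {z : G | ∃ x ∈ L, ∃ y ∈ M, z = t x y}

/-- The "tensor product" of two subspaces inside the model `G` of `E ⊗ F`. -/
def tensorSub (t : E →ₗ[ℝ] F →ₗ[ℝ] G) (A : Submodule ℝ E) (B : Submodule ℝ F) :
    Submodule ℝ G :=
  Submodule.span ℝ {z : G | ∃ x ∈ A, ∃ y ∈ B, z = t x y}

end TensorDefs

end

/-!
Write `πᵢ` for the orthogonal projection onto `Fᵢ`. Since `F₁ ⟂ F₂`, every `x ∈ F₃` splits as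
`x = π₁ x + π₂ x`, and `π₃ = π₁ + π₂`. For (a): if `x ∈ L₃` and `π₁ x ∈ L`, then
`π₂ x = x - π₁ x ∈ L`, so `x ∈ L₁ ⊕ L₂`; this is exactly the kernel condition. For (b): the map
is induced by the inclusion `π₁(L) ⊆ π₁(L) + π₂(L)`, which sends `L₁ ⊆ π₃(L)` to zero, and it is
onto because `π₂ z = π₃ z - π₁ z` for every `z ∈ L`.
-/

namespace Submodule

variable {R M N : Type*} [Ring R] [AddCommGroup M] [Module R M] [AddCommGroup N] [Module R N]

theorem mapQ_injective_of_comap_eq {p : Submodule R M} {q : Submodule R N} (f : M →ₗ[R] N)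
    (h : q.comap f = p) : Function.Injective (p.mapQ q f h.ge) := by
  rw [← LinearMap.ker_eq_bot, ker_mapQ, h, mkQ_map_self]

theorem mapQ_inclusion_surjective {A S C D : Submodule R M} (hAS : A ≤ S) (hSA : S ≤ A ⊔ C)
    (hDC : D ≤ C) :
    Function.Surjective
      ((D.comap A.subtype).mapQ (C.comap S.subtype) (inclusion hAS) fun _ hx => hDC hx) := by
  intro c
  obtain ⟨⟨s, hs⟩, rfl⟩ := Quotient.mk_surjective _ c
  obtain ⟨a, ha, c, hc, rfl⟩ := mem_sup.1 (hSA hs)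
  refine ⟨Quotient.mk ⟨a, ha⟩, (Quotient.eq _).2 ?_⟩
  simpa [mem_comap] using neg_mem hc

end Submodule

section Projection

variable {E : Type*} [NormedAddCommGroup E] [InnerProductSpace ℝ E] [FiniteDimensional ℝ E]

lemma projMap_apply (F : Submodule ℝ E) (x : E) : projMap F x = F.starProjection x := rfl

lemma projMap_mem (F : Submodule ℝ E) (x : E) : projMap F x ∈ F :=
  F.starProjection_apply_mem x

lemma projMap_add_of_mem_orthogonal {F : Submodule ℝ E} {a b : E} (ha : a ∈ F) (hb : b ∈ Fᗮ) :
    projMap F (a + b) = a :=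
  F.eq_starProjection_of_mem_orthogonal' ha hb rfl

lemma projMap_sup {F G : Submodule ℝ E} (hFG : F ⟂ G) (x : E) :
    projMap (F ⊔ G) x = projMap F x + projMap G x := by
  refine (F ⊔ G).eq_starProjection_of_mem_orthogonal
    (Submodule.add_mem_sup (projMap_mem F x) (projMap_mem G x)) ?_
  rw [← Submodule.inf_orthogonal, Submodule.mem_inf]
  constructor
  · simpa only [sub_add_eq_sub_sub, projMap_apply] using
      sub_mem (F.sub_starProjection_mem_orthogonal x) (hFG.symm.le (projMap_mem G x))
  · simpa only [sub_add_eq_sub_sub_swap, projMap_apply] using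
      sub_mem (G.sub_starProjection_mem_orthogonal x) (hFG.le (projMap_mem F x))

lemma inf_le_projLat (L : Submodule ℤ E) {F F' : Submodule ℝ E} (h : F ≤ F') :
    L ⊓ F.restrictScalars ℤ ≤ projLat F' L := fun x hx => by
  simpa [projMap_apply, F'.starProjection_eq_self_iff.2 (h hx.2)] using
    projMap_mem_projLat F' L hx.1

lemma projLat_le_sup_projLat_sup (L : Submodule ℤ E) {F G : Submodule ℝ E} (hFG : F ⟂ G) :
    projLat G L ≤ projLat F L ⊔ projLat (F ⊔ G) L := by
  rintro _ ⟨z, hz, rfl⟩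
  have hsplit : projMap G z = -projMap F z + projMap (F ⊔ G) z := by
    rw [projMap_sup hFG]; abel
  rw [hsplit]
  exact Submodule.add_mem_sup (neg_mem (projMap_mem_projLat F L hz)) (projMap_mem_projLat _ L hz)

noncomputable def projLatRestrict (F : Submodule ℝ E) {L M : Submodule ℤ E} (h : M ≤ L) :
    M →ₗ[ℤ] projLat F L :=
  (projMap F ∘ₗ M.subtype).codRestrict _ fun x => projMap_mem_projLat F L (h x.2)

lemma projMap_mem_iff_mem_sup {L : Submodule ℤ E} {F G : Submodule ℝ E} (hFG : F ⟂ G) {x : E}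
    (hxL : x ∈ L) (hx : x ∈ F ⊔ G) :
    projMap F x ∈ L ↔ x ∈ L ⊓ F.restrictScalars ℤ ⊔ L ⊓ G.restrictScalars ℤ := by
  obtain ⟨a, ha, b, hb, rfl⟩ := Submodule.mem_sup.1 hx
  rw [projMap_add_of_mem_orthogonal ha (hFG.symm.le hb)]
  constructor
  · intro haL
    exact Submodule.add_mem_sup ⟨haL, ha⟩ ⟨by simpa using sub_mem hxL haL, hb⟩
  · intro hab
    obtain ⟨a', ⟨ha'L, ha'⟩, b', ⟨-, hb'⟩, hab'⟩ := Submodule.mem_sup.1 hab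
    have := congrArg (projMap F) hab'
    rw [projMap_add_of_mem_orthogonal ha (hFG.symm.le hb),
      projMap_add_of_mem_orthogonal ha' (hFG.symm.le hb')] at this
    exact this ▸ ha'L

lemma comap_projLatRestrict {L M : Submodule ℤ E} {F G : Submodule ℝ E} (hFG : F ⟂ G)
    (hML : M ≤ L) (hM : M ≤ (F ⊔ G).restrictScalars ℤ) :
    ((L ⊓ F.restrictScalars ℤ).comap (projLat F L).subtype).comap (projLatRestrict F hML) =
      (L ⊓ F.restrictScalars ℤ ⊔ L ⊓ G.restrictScalars ℤ).comap M.subtype := by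
  ext x
  simp only [Submodule.mem_comap, Submodule.subtype_apply, projLatRestrict,
    LinearMap.codRestrict_apply, LinearMap.comp_apply, Submodule.mem_inf,
    Submodule.restrictScalars_mem, projMap_mem, and_true]
  exact projMap_mem_iff_mem_sup hFG (hML x.2) (hM x.2)

end Projection

theorem statement_19_general {E : Type*} [NormedAddCommGroup E] [InnerProductSpace ℝ E]
    [FiniteDimensional ℝ E] (L : Submodule ℤ E)
    (F₁ F₂ F₃ : Submodule ℝ E)
    (horth : ∀ x ∈ F₁, ∀ y ∈ F₂, ⟪x, y⟫ = 0) (hF₃ : F₃ = F₁ ⊔ F₂)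
    (L₁ L₂ L₃ : Submodule ℤ E)
    (hL₁ : L₁ = L ⊓ F₁.restrictScalars ℤ) (hL₂ : L₂ = L ⊓ F₂.restrictScalars ℤ)
    (hL₃ : L₃ = L ⊓ F₃.restrictScalars ℤ) (hL₃L : L₃ ≤ L) :
    (∃ f : (↥L₃ ⧸ Submodule.comap L₃.subtype (L₁ ⊔ L₂)) →ₗ[ℤ]
        (↥(projLat F₁ L) ⧸ Submodule.comap (projLat F₁ L).subtype L₁),
      Function.Injective f ∧
      ∀ (x : E) (hx : x ∈ L₃),
        f (Submodule.Quotient.mk ⟨x, hx⟩) =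
          Submodule.Quotient.mk ⟨projMap F₁ x, projMap_mem_projLat F₁ L (hL₃L hx)⟩) ∧
    (∃ f : (↥L₃ ⧸ Submodule.comap L₃.subtype (L₁ ⊔ L₂)) →ₗ[ℤ]
        (↥(projLat F₂ L) ⧸ Submodule.comap (projLat F₂ L).subtype L₂),
      Function.Injective f ∧
      ∀ (x : E) (hx : x ∈ L₃),
        f (Submodule.Quotient.mk ⟨x, hx⟩) =
          Submodule.Quotient.mk ⟨projMap F₂ x, projMap_mem_projLat F₂ L (hL₃L hx)⟩) ∧
    (∃ f : (↥(projLat F₁ L) ⧸ Submodule.comap (projLat F₁ L).subtype L₁) →ₗ[ℤ]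
        (↥(projLat F₁ L ⊔ projLat F₂ L) ⧸
          Submodule.comap (projLat F₁ L ⊔ projLat F₂ L).subtype (projLat F₃ L)),
      Function.Surjective f ∧
      ∀ (y : E) (hy : y ∈ projLat F₁ L),
        f (Submodule.Quotient.mk ⟨y, hy⟩) =
          Submodule.Quotient.mk ⟨y, Submodule.mem_sup_left hy⟩) ∧
    (∃ f : (↥(projLat F₂ L) ⧸ Submodule.comap (projLat F₂ L).subtype L₂) →ₗ[ℤ]
        (↥(projLat F₁ L ⊔ projLat F₂ L) ⧸
          Submodule.comap (projLat F₁ L ⊔ projLat F₂ L).subtype (projLat F₃ L)),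
      Function.Surjective f ∧
      ∀ (y : E) (hy : y ∈ projLat F₂ L),
        f (Submodule.Quotient.mk ⟨y, hy⟩) =
          Submodule.Quotient.mk ⟨y, Submodule.mem_sup_right hy⟩) := by
  have hF : F₁ ⟂ F₂ := Submodule.isOrtho_iff_inner_eq.2 horth
  subst hL₁ hL₂ hL₃ hF₃
  have hL₃F : L ⊓ (F₁ ⊔ F₂).restrictScalars ℤ ≤ (F₁ ⊔ F₂).restrictScalars ℤ := inf_le_right
  have hπ₂ : projLat F₂ L ≤ projLat F₁ L ⊔ projLat (F₁ ⊔ F₂) L :=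
    projLat_le_sup_projLat_sup L hF
  have hπ₁ : projLat F₁ L ≤ projLat F₂ L ⊔ projLat (F₁ ⊔ F₂) L := by
    simpa only [sup_comm F₂ F₁] using projLat_le_sup_projLat_sup L hF.symm
  refine ⟨⟨_, Submodule.mapQ_injective_of_comap_eq _ (comap_projLatRestrict hF hL₃L hL₃F),
      fun _ _ => rfl⟩,
    ⟨_, Submodule.mapQ_injective_of_comap_eq (projLatRestrict F₂ hL₃L) ?_, fun _ _ => rfl⟩,
    ⟨_, Submodule.mapQ_inclusion_surjective le_sup_left (sup_le le_sup_left hπ₂)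
      (inf_le_projLat L le_sup_left), fun _ _ => rfl⟩,
    ⟨_, Submodule.mapQ_inclusion_surjective le_sup_right (sup_le hπ₁ le_sup_left)
      (inf_le_projLat L le_sup_right), fun _ _ => rfl⟩⟩
  rw [sup_comm (L ⊓ _)]
  exact comap_projLatRestrict hF.symm hL₃L (sup_comm F₁ F₂ ▸ hL₃F)

/-- Let `F₁ ⊥ F₂` be orthogonal subspaces of `E`, `F₃ = F₁ ⊕ F₂`,
`Lᵢ = L ∩ Fᵢ`. Then (a) the projections `π₁`, `π₂` induce injections
`L₃/(L₁ ⊕ L₂) ↪ πᵢ(L)/Lᵢ`, and (b) there are natural surjections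
`πᵢ(L)/Lᵢ ↠ (π₁(L) ⊕ π₂(L))/π₃(L)`. -/
theorem statement_19 {E : Type*} [NormedAddCommGroup E] [InnerProductSpace ℝ E]
    [FiniteDimensional ℝ E] (L : Submodule ℤ E) (hL : IsEucLattice L)
    (F₁ F₂ F₃ : Submodule ℝ E)
    (horth : ∀ x ∈ F₁, ∀ y ∈ F₂, ⟪x, y⟫ = 0) (hF₃ : F₃ = F₁ ⊔ F₂)
    (L₁ L₂ L₃ : Submodule ℤ E)
    (hL₁ : L₁ = L ⊓ F₁.restrictScalars ℤ) (hL₂ : L₂ = L ⊓ F₂.restrictScalars ℤ)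
    (hL₃ : L₃ = L ⊓ F₃.restrictScalars ℤ) (hL₃L : L₃ ≤ L) :
    (∃ f : (↥L₃ ⧸ Submodule.comap L₃.subtype (L₁ ⊔ L₂)) →ₗ[ℤ]
        (↥(projLat F₁ L) ⧸ Submodule.comap (projLat F₁ L).subtype L₁),
      Function.Injective f ∧
      ∀ (x : E) (hx : x ∈ L₃),
        f (Submodule.Quotient.mk ⟨x, hx⟩) =
          Submodule.Quotient.mk ⟨projMap F₁ x, projMap_mem_projLat F₁ L (hL₃L hx)⟩) ∧
    (∃ f : (↥L₃ ⧸ Submodule.comap L₃.subtype (L₁ ⊔ L₂)) →ₗ[ℤ]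
        (↥(projLat F₂ L) ⧸ Submodule.comap (projLat F₂ L).subtype L₂),
      Function.Injective f ∧
      ∀ (x : E) (hx : x ∈ L₃),
        f (Submodule.Quotient.mk ⟨x, hx⟩) =
          Submodule.Quotient.mk ⟨projMap F₂ x, projMap_mem_projLat F₂ L (hL₃L hx)⟩) ∧
    (∃ f : (↥(projLat F₁ L) ⧸ Submodule.comap (projLat F₁ L).subtype L₁) →ₗ[ℤ]
        (↥(projLat F₁ L ⊔ projLat F₂ L) ⧸
          Submodule.comap (projLat F₁ L ⊔ projLat F₂ L).subtype (projLat F₃ L)),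
      Function.Surjective f ∧
      ∀ (y : E) (hy : y ∈ projLat F₁ L),
        f (Submodule.Quotient.mk ⟨y, hy⟩) =
          Submodule.Quotient.mk ⟨y, Submodule.mem_sup_left hy⟩) ∧
    (∃ f : (↥(projLat F₂ L) ⧸ Submodule.comap (projLat F₂ L).subtype L₂) →ₗ[ℤ]
        (↥(projLat F₁ L ⊔ projLat F₂ L) ⧸
          Submodule.comap (projLat F₁ L ⊔ projLat F₂ L).subtype (projLat F₃ L)),
      Function.Surjective f ∧
      ∀ (y : E) (hy : y ∈ projLat F₂ L),
        f (Submodule.Quotient.mk ⟨y, hy⟩) =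
          Submodule.Quotient.mk ⟨y, Submodule.mem_sup_right hy⟩) :=
  statement_19_general L F₁ F₂ F₃ horth hF₃ L₁ L₂ L₃ hL₁ hL₂ hL₃ hL₃L
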